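/- Let G = T × ⟨z⟩ where T is a finite abelian group with |T| = s > 1 and z has infinite order. Then for each integer n ≥ 2, the subgroup T × ⟨z^{sn}⟩ is a non-power subgroup of G; in particular G has infinitely many non-power subgroups. -/

import Mathlib

/-- `G^m`: the subgroup generated by all `m`-th powers of elements of `G`. -/
def powerSubgroup (G : Type*) [Group G] (m : ℕ) : Subgroup G :=
  Subgroup.closure (Set.range fun g : G => g ^ m)

/-!
In `T × ⟨z⟩` the power subgroups split as `G^m = T^m × ⟨z^m⟩`. If `T × ⟨z^j⟩` were `G^m`, comparing
second factors forces `j ∣ m`; when the exponent of `T` divides `j` this kills `T^m`, contradicting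
`T^m = T ≠ 1`. Distinct multiples `j` of `|T|` give distinct subgroups, hence infinitely many.
-/

open Subgroup

section powerSubgroup

variable {G H : Type*} [CommGroup G] [CommGroup H]

theorem powerSubgroup_eq_range (m : ℕ) : powerSubgroup G m = (powMonoidHom m : G →* G).range := by
  rw [powerSubgroup, ← (powMonoidHom m : G →* G).range.closure_eq, MonoidHom.coe_range]
  rfl

theorem pow_mem_powerSubgroup (g : G) (m : ℕ) : g ^ m ∈ powerSubgroup G m :=
  subset_closure ⟨g, rfl⟩

theorem powerSubgroup_prod (m : ℕ) :
    powerSubgroup (G × H) m = (powerSubgroup G m).prod (powerSubgroup H m) := by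
  ext ⟨a, b⟩
  simp only [powerSubgroup_eq_range, mem_prod, MonoidHom.mem_range, powMonoidHom_apply,
    Prod.exists, Prod.pow_mk, Prod.mk.injEq, exists_and_left, exists_and_right]

theorem powerSubgroup_eq_bot_of_exponent_dvd {m : ℕ} (hm : Monoid.exponent G ∣ m) :
    powerSubgroup G m = ⊥ := by
  rw [powerSubgroup_eq_range, eq_bot_iff]
  rintro _ ⟨g, rfl⟩
  exact mem_bot.mpr (Monoid.exponent_dvd_iff_forall_pow_eq_one.mp hm g)

end powerSubgroup

theorem ofAdd_one_pow_mem_zpowers_iff {a b : ℕ} :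
    Multiplicative.ofAdd (1 : ℤ) ^ a ∈ zpowers (Multiplicative.ofAdd (1 : ℤ) ^ b) ↔ b ∣ a := by
  rw [← Int.natCast_dvd_natCast, ← Int.mem_zmultiples_iff]
  simp only [← ofAdd_nsmul, nsmul_one, mem_zpowers_iff, AddSubgroup.mem_zmultiples_iff,
    ← ofAdd_zsmul, EmbeddingLike.apply_eq_iff_eq]

theorem zpowers_ofAdd_one_pow_injective :
    Function.Injective fun n : ℕ => zpowers (Multiplicative.ofAdd (1 : ℤ) ^ n) := by
  intro a b (h : zpowers _ = zpowers _)
  have hba : b ∣ a := ofAdd_one_pow_mem_zpowers_iff.mp (h ▸ mem_zpowers _)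
  have hab : a ∣ b := ofAdd_one_pow_mem_zpowers_iff.mp (h ▸ mem_zpowers _)
  exact Nat.dvd_antisymm hab hba

theorem top_prod_zpowers_ne_powerSubgroup {T : Type*} [CommGroup T] [Nontrivial T] {j : ℕ}
    (hj : Monoid.exponent T ∣ j) (m : ℕ) :
    (⊤ : Subgroup T).prod (zpowers (Multiplicative.ofAdd (1 : ℤ) ^ j)) ≠
      powerSubgroup (T × Multiplicative ℤ) m := by
  rw [powerSubgroup_prod]
  intro h
  have hjm : j ∣ m := by
    have hzm : ((1 : T), Multiplicative.ofAdd (1 : ℤ) ^ m) ∈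
        (powerSubgroup T m).prod (powerSubgroup (Multiplicative ℤ) m) :=
      ⟨one_mem _, pow_mem_powerSubgroup _ m⟩
    exact ofAdd_one_pow_mem_zpowers_iff.mp (h ▸ hzm).2
  obtain ⟨t, ht⟩ := exists_ne (1 : T)
  have htm : (t, (1 : Multiplicative ℤ)) ∈
      (⊤ : Subgroup T).prod (zpowers (Multiplicative.ofAdd (1 : ℤ) ^ j)) :=
    ⟨mem_top t, one_mem _⟩
  have hbot := powerSubgroup_eq_bot_of_exponent_dvd (hj.trans hjm)
  exact ht (mem_bot.mp (hbot ▸ (h ▸ htm).1))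

theorem nonpower_subgroups_of_T_times_Z {T : Type*} [CommGroup T] [Finite T]
    (hs : 1 < Nat.card T) :
    (∀ n : ℕ, 2 ≤ n → ∀ m : ℕ,
        (⊤ : Subgroup T).prod
            (Subgroup.zpowers ((Multiplicative.ofAdd (1 : ℤ)) ^ (Nat.card T * n))) ≠
          powerSubgroup (T × Multiplicative ℤ) m) ∧
      {H : Subgroup (T × Multiplicative ℤ) |
        ∀ m : ℕ, H ≠ powerSubgroup (T × Multiplicative ℤ) m}.Infinite := by
  have : Nontrivial T := Finite.one_lt_card_iff_nontrivial.mp hs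
  have hnonpower (n : ℕ) (m : ℕ) := top_prod_zpowers_ne_powerSubgroup
    (Group.exponent_dvd_nat_card.trans (dvd_mul_right (Nat.card T) n)) m
  refine ⟨fun n _ => hnonpower n, Set.infinite_of_injective_forall_mem ?_ hnonpower⟩
  intro a b hab
  simp only [top_prod] at hab
  exact Nat.eq_of_mul_eq_mul_left Nat.card_pos
    (zpowers_ofAdd_one_pow_injective (comap_injective Prod.snd_surjective hab))
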